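/- Let ℓ > 5 be a prime and let n ≥ 2 be an integer. If H is a subgroup of the n-fold direct product SL₂(ℤ/ℓℤ)ⁿ such that for every pair of indices 1 ≤ i < j ≤ n the image of H under the projection onto the i-th and j-th factors is all of SL₂(ℤ/ℓℤ) × SL₂(ℤ/ℓℤ), then H = SL₂(ℤ/ℓℤ)ⁿ. -/

import Mathlib

open Matrix
open scoped commutatorElement MatrixGroups

/-!
Fix an index `j`. The `j`-coordinates of the elements of `H` that are trivial on a set `s` of
other indices form a subgroup of `G j`, and it stays all of `G j` when `s` grows by an index `i`:
if `x ∈ H` is trivial on `s` and `y ∈ H` has `y i = 1`, then `⁅x, y⁆ ∈ H` is trivial on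
`insert i s` with `j`-coordinate `⁅x j, y j⁆`, and such commutators generate the perfect group
`G j`. Taking for `s` all indices but `j` puts every `Pi.mulSingle j g` in `H`.
SL₂(𝔽_ℓ) is perfect once `2` and `3` are invertible, i.e. for `ℓ > 3`.
-/

theorem ZMod.natCast_ne_zero_of_pos_of_lt {p k : ℕ} (hk : 0 < k) (hkp : k < p) :
    (k : ZMod p) ≠ 0 := by
  rw [Ne, ZMod.natCast_eq_zero_iff]
  exact Nat.not_dvd_of_pos_of_lt hk hkp

theorem Matrix.SL2.isPerfect_of_two_ne_zero_of_three_ne_zero {F : Type*} [Field F]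
    (h2 : (2 : F) ≠ 0) (h3 : (3 : F) ≠ 0) : Group.IsPerfect SL(2, F) :=
  ⟨SL2.commutator_eq_top h2 fun h4 => h3 (by linear_combination h4)⟩

namespace Subgroup

variable {ι : Type*} {G : ι → Type*} [∀ i, Group (G i)] {H : Subgroup (∀ i, G i)} {i j : ι}

theorem map_prod_evalMonoidHom_swap
    (h : H.map ((Pi.evalMonoidHom G i).prod (Pi.evalMonoidHom G j)) = ⊤) :
    H.map ((Pi.evalMonoidHom G j).prod (Pi.evalMonoidHom G i)) = ⊤ := by
  have hswap : (Pi.evalMonoidHom G j).prod (Pi.evalMonoidHom G i) =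
      (MulEquiv.prodComm : G i × G j ≃* G j × G i).toMonoidHom.comp
        ((Pi.evalMonoidHom G i).prod (Pi.evalMonoidHom G j)) := rfl
  rw [hswap, ← map_map, h, map_top_of_surjective _ (MulEquiv.surjective _)]

theorem exists_mem_apply_eq_apply_eq
    (h : H.map ((Pi.evalMonoidHom G i).prod (Pi.evalMonoidHom G j)) = ⊤) (a : G i) (b : G j) :
    ∃ x ∈ H, x i = a ∧ x j = b := by
  obtain ⟨x, hx, hxab⟩ := h.symm ▸ mem_top (a, b)
  exact ⟨x, hx, congr_arg Prod.fst hxab, congr_arg Prod.snd hxab⟩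

theorem map_evalMonoidHom_inf_pi_insert_eq_top [Group.IsPerfect (G j)] {s : Set ι}
    (hs : (H ⊓ pi s fun _ => ⊥).map (Pi.evalMonoidHom G j) = ⊤)
    (hpair : H.map ((Pi.evalMonoidHom G i).prod (Pi.evalMonoidHom G j)) = ⊤) :
    (H ⊓ pi (insert i s) fun _ => ⊥).map (Pi.evalMonoidHom G j) = ⊤ := by
  rw [eq_top_iff, ← Group.IsPerfect.commutator_eq_top, _root_.commutator_def, commutator_le]
  rintro b - c -
  obtain ⟨x, hx, rfl⟩ := (eq_top_iff' _).mp hs b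
  obtain ⟨hxH, hxs⟩ := mem_inf.mp hx
  obtain ⟨y, hyH, hyi, rfl⟩ := exists_mem_apply_eq_apply_eq hpair 1 c
  have hxyH : ⁅x, y⁆ ∈ H := by
    rw [commutatorElement_def]
    exact mul_mem (mul_mem (mul_mem hxH hyH) (inv_mem hxH)) (inv_mem hyH)
  refine ⟨⁅x, y⁆, mem_inf.mpr ⟨hxyH, (mem_pi _).mpr ?_⟩, map_commutatorElement _ x y⟩
  rintro m (rfl | hm) <;> refine mem_bot.mpr (show ⁅x m, y m⁆ = 1 from ?_)
  · rw [hyi, commutatorElement_one_right]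
  · rw [mem_bot.mp ((mem_pi _).mp hxs m hm), commutatorElement_one_left]

variable [∀ i, Group.IsPerfect (G i)]

theorem map_evalMonoidHom_inf_pi_eq_top [DecidableEq ι] [Nontrivial ι]
    (hH : ∀ i j, i ≠ j → H.map ((Pi.evalMonoidHom G i).prod (Pi.evalMonoidHom G j)) = ⊤)
    {s : Finset ι} (hjs : j ∉ s) :
    (H ⊓ pi s fun _ => ⊥).map (Pi.evalMonoidHom G j) = ⊤ := by
  induction s using Finset.induction_on with
  | empty =>
    obtain ⟨i, hij⟩ := exists_ne j
    rw [Finset.coe_empty, pi_empty, inf_top_eq, eq_top_iff]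
    rintro g -
    obtain ⟨x, hx, -, rfl⟩ := exists_mem_apply_eq_apply_eq (hH i j hij) 1 g
    exact mem_map_of_mem _ hx
  | insert i s _ ih =>
    rw [Finset.mem_insert, not_or] at hjs
    rw [Finset.coe_insert]
    exact map_evalMonoidHom_inf_pi_insert_eq_top (ih hjs.2) (hH i j (Ne.symm hjs.1))

theorem eq_top_of_map_prod_evalMonoidHom_eq_top [Finite ι] [Nontrivial ι]
    (hH : ∀ i j, i ≠ j → H.map ((Pi.evalMonoidHom G i).prod (Pi.evalMonoidHom G j)) = ⊤) :
    H = ⊤ := by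
  classical
  have := Fintype.ofFinite ι
  refine eq_top_iff.mpr fun x _ => pi_mem_of_mulSingle_mem x fun j => ?_
  have hj := map_evalMonoidHom_inf_pi_eq_top hH (Finset.notMem_erase j Finset.univ)
  obtain ⟨y, hy, hyj⟩ := (eq_top_iff' _).mp hj (x j)
  obtain ⟨hyH, hy1⟩ := mem_inf.mp hy
  suffices y = Pi.mulSingle j (x j) from this ▸ hyH
  ext m
  rcases eq_or_ne m j with rfl | hm
  · simpa using hyj
  · rw [Pi.mulSingle_eq_of_ne hm]
    exact mem_bot.mp ((mem_pi _).mp hy1 m (by simpa using hm))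

end Subgroup

/-- Ribet's lemma: a subgroup of `SL₂(ℤ/ℓℤ)ⁿ` (with `ℓ > 5` prime, `n ≥ 2`)
surjecting onto every pair of factors is the whole group. -/
theorem stmt3 (ℓ n : ℕ) (hℓ : ℓ.Prime) (hℓ5 : 5 < ℓ) (hn : 2 ≤ n)
    (H : Subgroup (Fin n → Matrix.SpecialLinearGroup (Fin 2) (ZMod ℓ)))
    (hpairs : ∀ i j : Fin n, i < j →
      H.map ((Pi.evalMonoidHom (fun _ => Matrix.SpecialLinearGroup (Fin 2) (ZMod ℓ)) i).prod
        (Pi.evalMonoidHom (fun _ => Matrix.SpecialLinearGroup (Fin 2) (ZMod ℓ)) j)) = ⊤) :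
    H = ⊤ := by
  have : Fact ℓ.Prime := ⟨hℓ⟩
  have : Nontrivial (Fin n) := Fin.nontrivial_iff_two_le.mpr hn
  have : Group.IsPerfect SL(2, ZMod ℓ) :=
    SL2.isPerfect_of_two_ne_zero_of_three_ne_zero
      (by exact_mod_cast ZMod.natCast_ne_zero_of_pos_of_lt two_pos (by omega))
      (by exact_mod_cast ZMod.natCast_ne_zero_of_pos_of_lt three_pos (by omega))
  refine Subgroup.eq_top_of_map_prod_evalMonoidHom_eq_top fun i j hij => ?_
  rcases hij.lt_or_gt with hlt | hgt
  · exact hpairs i j hlt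
  · exact Subgroup.map_prod_evalMonoidHom_swap (hpairs j i hgt)
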